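/- arXiv:2305.16751 — 3 statements merged into one kernel-verified Lean document; each statement's English description precedes it below -/
import Mathlib

section
/- Let x⃗ = (x₁,…,xₘ) and y⃗ = (y₁,…,yₘ) be m-tuples of bitstrings, coordinate-wise of equal lengths. If xᵢ < yᵢ (as binary numbers) for every i, then the set P0(x⃗) ∩ P1(y⃗) has exactly one element; otherwise it is empty. -/
/-- Numeric value of a bitstring, most significant bit first. -/
def bval (x : List Bool) : ℕ := x.foldl (fun n b => 2 * n + b.toNat) 0

/-- `P0 x` is the set of bitstrings `v` such that `v ++ [0]` is a prefix of `x`. -/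
def P0 (x : List Bool) : Set (List Bool) := {v | v ++ [false] <+: x}

/-- `P1 x` is the set of bitstrings `v` such that `v ++ [1]` is a prefix of `x`. -/
def P1 (x : List Bool) : Set (List Bool) := {v | v ++ [true] <+: x}


/-- Coordinate-wise `P0` on tuples of bitstrings (Cartesian product). -/
def P0v {m : ℕ} (x : Fin m → List Bool) : Set (Fin m → List Bool) := {v | ∀ i, v i ∈ P0 (x i)}

/-- Coordinate-wise `P1` on tuples of bitstrings (Cartesian product). -/
def P1v {m : ℕ} (x : Fin m → List Bool) : Set (Fin m → List Bool) := {v | ∀ i, v i ∈ P1 (x i)}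

theorem bval_aux (x : List Bool) (n : ℕ) :
    x.foldl (fun n b => 2 * n + b.toNat) n = n * 2 ^ x.length + bval x := by
  induction x generalizing n with
  | nil => simp [bval]
  | cons a x ih =>
    simp only [List.foldl_cons, List.length_cons, bval]
    rw [ih, ih]
    ring

theorem bval_cons (a : Bool) (x : List Bool) :
    bval (a :: x) = a.toNat * 2 ^ x.length + bval x := by
  show x.foldl _ _ = _
  rw [bval_aux]
  ring_nf

theorem bval_append (u w : List Bool) :
    bval (u ++ w) = bval u * 2 ^ w.length + bval w := by
  show (u ++ w).foldl _ _ = _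
  rw [List.foldl_append, bval_aux]
  rfl

theorem bval_lt (x : List Bool) : bval x < 2 ^ x.length := by
  induction x with
  | nil => simp [bval]
  | cons a x ih =>
    rw [bval_cons, List.length_cons, pow_succ]
    cases a <;> simp <;> omega

theorem exists_witness : ∀ (x y : List Bool), x.length = y.length →
    bval x < bval y → ∃ v, v ++ [false] <+: x ∧ v ++ [true] <+: y := by
  intro x
  induction x with
  | nil =>
    intro y hl h
    have : y = [] := List.length_eq_zero_iff.mp (by simpa using hl.symm)
    subst this
    simp [bval] at h
  | cons a x ih =>
    intro y hl h
    cases y with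
    | nil => simp at hl
    | cons b y' =>
      have hl' : x.length = y'.length := by simpa using hl
      rw [bval_cons, bval_cons, hl'] at h
      cases a <;> cases b
      · simp at h
        obtain ⟨v, h1, h2⟩ := ih y' hl' h
        exact ⟨false :: v, List.cons_prefix_cons.mpr ⟨rfl, h1⟩,
          List.cons_prefix_cons.mpr ⟨rfl, h2⟩⟩
      · exact ⟨[], ⟨x, rfl⟩, ⟨y', rfl⟩⟩
      · have := bval_lt y'
        rw [hl'] at *
        simp at h
        omega
      · simp at h
        obtain ⟨v, h1, h2⟩ := ih y' hl' h
        exact ⟨true :: v, List.cons_prefix_cons.mpr ⟨rfl, h1⟩,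
          List.cons_prefix_cons.mpr ⟨rfl, h2⟩⟩

theorem lt_of_witness {x y v : List Bool} (hl : x.length = y.length)
    (h0 : v ++ [false] <+: x) (h1 : v ++ [true] <+: y) : bval x < bval y := by
  obtain ⟨s, hs⟩ := h0
  obtain ⟨t, ht⟩ := h1
  subst hs; subst ht
  have hst : t.length = s.length := by simp at hl; omega
  rw [bval_append, bval_append, bval_append, bval_append, hst]
  have e0 : bval [false] = 0 := rfl
  have e1 : bval [true] = 1 := rfl
  have key : bval s < 2 ^ s.length + bval t := by have := bval_lt s; omega
  rw [e0, e1, add_mul, add_mul]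
  simp only [Nat.zero_mul, Nat.add_zero, Nat.one_mul, Nat.add_assoc]
  exact Nat.add_lt_add_left key _

theorem witness_aux {x y v w : List Bool}
    (hv0 : v ++ [false] <+: x) (hv1 : v ++ [true] <+: y)
    (hw0 : w ++ [false] <+: x) (hw1 : w ++ [true] <+: y)
    (h : v.length < w.length) : False := by
  have hwx : w <+: x := (List.prefix_append w [false]).trans hw0
  have hwy : w <+: y := (List.prefix_append w [true]).trans hw1
  have p0 : v ++ [false] <+: w :=
    List.prefix_of_prefix_length_le hv0 hwx (by simp; omega)
  have p1 : v ++ [true] <+: w :=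
    List.prefix_of_prefix_length_le hv1 hwy (by simp; omega)
  have : v ++ [false] = v ++ [true] := by
    rcases List.prefix_or_prefix_of_prefix p0 p1 with h' | h' <;>
      [exact h'.eq_of_length (by simp); exact (h'.eq_of_length (by simp)).symm]
  simp at this

theorem witness_unique {x y v w : List Bool}
    (hv0 : v ++ [false] <+: x) (hv1 : v ++ [true] <+: y)
    (hw0 : w ++ [false] <+: x) (hw1 : w ++ [true] <+: y) : v = w := by
  rcases lt_trichotomy v.length w.length with h | h | h
  · exact (witness_aux hv0 hv1 hw0 hw1 h).elim
  · have h1 := List.prefix_of_prefix_length_le hv0 hw0 (by simp [h])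
    have h2 := h1.eq_of_length (by simp [h])
    exact List.append_cancel_right h2
  · exact (witness_aux hw0 hw1 hv0 hv1 h).elim

theorem tuple_witness (m : ℕ) (x y : Fin m → List Bool)
    (hlen : ∀ i, (x i).length = (y i).length) :
    ((∀ i, bval (x i) < bval (y i)) → ∃! v : Fin m → List Bool, v ∈ P0v x ∩ P1v y) ∧
    (¬ (∀ i, bval (x i) < bval (y i)) → P0v x ∩ P1v y = ∅) := by
  constructor
  · intro h
    choose v hv0 hv1 using fun i => exists_witness (x i) (y i) (hlen i) (h i)
    refine ⟨v, ⟨hv0, hv1⟩, ?_⟩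
    rintro w ⟨hw0, hw1⟩
    funext i
    exact witness_unique (hw0 i) (hw1 i) (hv0 i) (hv1 i)
  · intro h
    ext v
    simp only [Set.mem_inter_iff, Set.mem_empty_iff_false, iff_false]
    rintro ⟨hv0, hv1⟩
    exact h fun i => lt_of_witness (hlen i) (hv0 i) (hv1 i)
end

section
/- Let (A, ⊕, e) be a commutative monoid, D a finite set of data points in ℕᵐ with weight function w : D → A, encode each coordinate as a bitstring of a fixed common length k, and let q ∈ ℕᵐ be a query similarly encoded. Then ⊕_{d ∈ D, d < q coordinate-wise} w(d) = ⊕_{d ∈ D} ⊕_{v ∈ P0(enc d) ∩ P1(enc q)} w(d), where each inner aggregation is over the (at most one-element) set P0(enc d) ∩ P1(enc q). -/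
/-- Encoding of a natural number as a bitstring of length `k`, most significant bit first. -/
def enc : ℕ → ℕ → List Bool
  | 0, _ => []
  | k + 1, n => enc k (n / 2) ++ [decide (n % 2 = 1)]

lemma enc_length (k n : ℕ) : (enc k n).length = k := by
  induction k generalizing n with
  | zero => rfl
  | succ k ih => simp [enc, ih]

lemma enc_inj {k a b : ℕ} (ha : a < 2 ^ k) (hb : b < 2 ^ k) (h : enc k a = enc k b) :
    a = b := by
  induction k generalizing a b with
  | zero => simp at ha hb; omega
  | succ k ih =>
    simp only [enc] at h
    obtain ⟨h1, h2⟩ := List.append_inj h (by rw [enc_length, enc_length])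
    rw [pow_succ] at ha hb
    have e1 : a / 2 = b / 2 := ih (by omega) (by omega) h1
    have e2 : decide (a % 2 = 1) = decide (b % 2 = 1) := by
      simpa using congrArg (·.headI) h2
    rw [decide_eq_decide] at e2
    omega

lemma pref_len {u x : List Bool} {b : Bool} (h : u ++ [b] <+: x) : u.length < x.length := by
  have := h.length_le; simpa using this

lemma pref_bit {u x : List Bool} {b : Bool} (h : u ++ [b] <+: x) :
    x[u.length]'(pref_len h) = b := by
  have := (h.getElem (i := u.length) (by simp)).symm
  simpa using this

lemma inter_subsingleton (x y : List Bool) : (P0 x ∩ P1 y).Subsingleton := by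
  have key : ∀ u v : List Bool, u ++ [false] <+: x → u ++ [true] <+: y →
      v ++ [false] <+: x → v ++ [true] <+: y → ¬ u.length < v.length := by
    intro u v hu0 hu1 hv0 hv1 hlt
    have hx : x[u.length]'(pref_len hu0) = false := pref_bit hu0
    have hy : y[u.length]'(pref_len hu1) = true := pref_bit hu1
    have hvx : v[u.length]'hlt = false := by
      have hv : v <+: x := (List.prefix_append v [false]).trans hv0
      rw [hv.getElem hlt]; exact hx
    have hvy : v[u.length]'hlt = true := by
      have hv : v <+: y := (List.prefix_append v [true]).trans hv1
      rw [hv.getElem hlt]; exact hy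
    rw [hvx] at hvy; exact Bool.false_ne_true hvy
  rintro u ⟨hu0, hu1⟩ v ⟨hv0, hv1⟩
  have hlen : u.length = v.length := by
    have h1 := key u v hu0 hu1 hv0 hv1
    have h2 := key v u hv0 hv1 hu0 hu1
    omega
  apply List.ext_getElem hlen
  intro i hi hi'
  have hu : u <+: x := (List.prefix_append u [false]).trans hu0
  have hv : v <+: x := (List.prefix_append v [false]).trans hv0
  rw [hu.getElem hi, hv.getElem hi']

lemma inter_nonempty {k a b : ℕ} (ha : a < 2 ^ k) (hb : b < 2 ^ k) :
    (P0 (enc k a) ∩ P1 (enc k b)).Nonempty ↔ a < b := by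
  induction k generalizing a b with
  | zero =>
    simp only [pow_zero] at ha hb
    constructor
    · rintro ⟨v, hv0, _⟩
      have := pref_len hv0
      simp [enc] at this
    · omega
  | succ k ih =>
    rw [pow_succ] at ha hb
    have ha2 : a / 2 < 2 ^ k := by omega
    have hb2 : b / 2 < 2 ^ k := by omega
    constructor
    · rintro ⟨v, hv0, hv1⟩
      simp only [P0, P1, enc, Set.mem_setOf_eq] at hv0 hv1
      rw [List.prefix_concat_iff] at hv0 hv1
      rcases hv0 with hv0 | hv0 <;> rcases hv1 with hv1 | hv1
      · obtain ⟨e1, e1'⟩ := List.append_inj hv0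
          (by have := congrArg List.length hv0; simpa [enc_length] using this)
        obtain ⟨e2, e2'⟩ := List.append_inj hv1
          (by have := congrArg List.length hv1; simpa [enc_length] using this)
        have hab : a / 2 = b / 2 := enc_inj ha2 hb2 (e1.symm.trans e2)
        have ha0 : ¬ a % 2 = 1 := by
          have := congrArg (·.headI) e1'
          simpa using this
        have hb1 : b % 2 = 1 := by
          have := congrArg (·.headI) e2'
          simpa using this.symm
        omega
      · exfalso
        have h1 : v.length + 1 = k + 1 := by
          have := congrArg List.length hv0; simpa [enc_length] using this
        have h2 := pref_len hv1
        rw [enc_length] at h2; omega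
      · exfalso
        have h1 : v.length + 1 = k + 1 := by
          have := congrArg List.length hv1; simpa [enc_length] using this
        have h2 := pref_len hv0
        rw [enc_length] at h2; omega
      · have hne : (P0 (enc k (a / 2)) ∩ P1 (enc k (b / 2))).Nonempty := ⟨v, hv0, hv1⟩
        have := (ih ha2 hb2).mp hne
        omega
    · intro hab
      by_cases h2 : a / 2 < b / 2
      · obtain ⟨v, hv0, hv1⟩ := (ih ha2 hb2).mpr h2
        refine ⟨v, ?_, ?_⟩
        · exact hv0.trans (List.prefix_append _ _)
        · exact hv1.trans (List.prefix_append _ _)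
      · have hd : a / 2 = b / 2 := by omega
        have hma : ¬ a % 2 = 1 := by omega
        have hmb : b % 2 = 1 := by omega
        refine ⟨enc k (a / 2), ?_, ?_⟩
        · show enc k (a / 2) ++ [false] <+: enc (k + 1) a
          simp [enc, hma]
        · show enc k (a / 2) ++ [true] <+: enc (k + 1) b
          simp [enc, hd, hmb]

lemma vec_subsingleton {m : ℕ} (x y : Fin m → List Bool) :
    (P0v x ∩ P1v y).Subsingleton := by
  rintro u ⟨hu0, hu1⟩ v ⟨hv0, hv1⟩
  funext i
  exact inter_subsingleton (x i) (y i) ⟨hu0 i, hu1 i⟩ ⟨hv0 i, hv1 i⟩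

lemma vec_nonempty {m k : ℕ} (a b : Fin m → ℕ) (ha : ∀ i, a i < 2 ^ k)
    (hb : ∀ i, b i < 2 ^ k) :
    (P0v (fun i => enc k (a i)) ∩ P1v (fun i => enc k (b i))).Nonempty ↔ ∀ i, a i < b i := by
  constructor
  · rintro ⟨v, hv0, hv1⟩ i
    exact (inter_nonempty (ha i) (hb i)).mp ⟨v i, hv0 i, hv1 i⟩
  · intro h
    choose v hv using fun i => (inter_nonempty (ha i) (hb i)).mpr (h i)
    exact ⟨v, fun i => (hv i).1, fun i => (hv i).2⟩

/-- Correctness of weighted aggregation over dominated points via prefix expansion,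
stated multiplicatively for a commutative monoid `A`. -/
theorem aggregation_via_prefix_expansion
    {A : Type*} [CommMonoid A] (m k : ℕ)
    (D : Finset (Fin m → ℕ)) (w : (Fin m → ℕ) → A) (q : Fin m → ℕ)
    (hD : ∀ d ∈ D, ∀ i, d i < 2 ^ k) (hq : ∀ i, q i < 2 ^ k) :
    ∏ d ∈ D.filter (fun d => ∀ i, d i < q i), w d =
      ∏ d ∈ D, ∏ᶠ _v ∈ (P0v (fun i => enc k (d i)) ∩ P1v (fun i => enc k (q i))), w d := by
  rw [Finset.prod_filter]
  refine Finset.prod_congr rfl fun d hd => ?_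
  rcases (vec_subsingleton (fun i => enc k (d i)) (fun i => enc k (q i))).eq_empty_or_singleton
      with hS | ⟨v0, hS⟩
  · rw [hS, finprod_mem_empty, if_neg]
    intro h
    have := (vec_nonempty d q (hD d hd) hq).mpr h
    rw [hS] at this
    exact Set.not_nonempty_empty this
  · rw [hS, finprod_mem_singleton, if_pos]
    apply (vec_nonempty d q (hD d hd) hq).mp
    rw [hS]
    exact ⟨v0, rfl⟩
end

section
/- Segmented scan is expressible by ordinary scan: for lists a over a monoid (A,⊕,e) and a sorted tag list t over a type with decidable equality, define the operation ⊛ on A × T by (a,s) ⊛ (b,t) = (if s = t then a ⊕ b else b, t). Then ⊛ is associative on pairs whose tag components come from a sorted list, and the first components of scan(zip(a,t), ⊛) coincide with segscan(a, t, ⊕). -/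
/-- Inclusive scan: `scan f [x₁,…,xₙ] = [x₁, f x₁ x₂, …, f (… ) xₙ]`. -/
def scan {X : Type*} (f : X → X → X) : List X → List X
  | [] => []
  | x :: rest => scanGo x rest
where
  scanGo : X → List X → List X
    | acc, [] => [acc]
    | acc, x :: rest => acc :: scanGo (f acc x) rest

/-- Segmented scan: inclusive prefix aggregation restarting whenever the tag changes. -/
def segscan {A T : Type*} [Mul A] [DecidableEq T] : List (A × T) → List A
  | [] => []
  | (a, t) :: rest => segscanGo a t rest
where
  segscanGo : A → T → List (A × T) → List A
    | acc, _, [] => [acc]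
    | acc, s, (a, t) :: rest => acc :: segscanGo (if s = t then acc * a else a) t rest

/-- The combining operation `⊛` on weight–tag pairs. -/
def segOp {A T : Type*} [Mul A] [DecidableEq T] (p q : A × T) : A × T :=
  (if p.2 = q.2 then p.1 * q.1 else q.1, q.2)

-- Associativity fails only for tags `s, t, s` with `t ≠ s`: the left side then drops `p.1`.
theorem segOp_assoc {A T : Type*} [Semigroup A] [DecidableEq T] (p q r : A × T)
    (h : p.2 = r.2 → q.2 = r.2) :
    segOp (segOp p q) r = segOp p (segOp q r) := by
  obtain ⟨a, s⟩ := p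
  obtain ⟨b, t⟩ := q
  obtain ⟨c, u⟩ := r
  by_cases hst : s = t <;> by_cases htu : t = u <;> simp_all [segOp, mul_assoc]

theorem segOp_assoc_of_le {A T : Type*} [Semigroup A] [PartialOrder T] [DecidableEq T]
    (p q r : A × T) (hpq : p.2 ≤ q.2) (hqr : q.2 ≤ r.2) :
    segOp (segOp p q) r = segOp p (segOp q r) :=
  segOp_assoc p q r fun hpr => le_antisymm hqr (hpr ▸ hpq)

theorem map_fst_scanGo_segOp {A T : Type*} [Mul A] [DecidableEq T] (l : List (A × T))
    (acc : A) (s : T) :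
    (scan.scanGo segOp (acc, s) l).map Prod.fst = segscan.segscanGo acc s l := by
  induction l generalizing acc s with
  | nil => rfl
  | cons x rest ih =>
    simp only [scan.scanGo, segscan.segscanGo, List.map_cons, segOp, ih]

theorem map_fst_scan_segOp {A T : Type*} [Mul A] [DecidableEq T] (l : List (A × T)) :
    (scan segOp l).map Prod.fst = segscan l := by
  cases l with
  | nil => rfl
  | cons x rest => exact map_fst_scanGo_segOp rest x.1 x.2

theorem segscan_by_scan_general {A T : Type*} [Monoid A] [LinearOrder T]
    (a : List A) (t : List T) :
    (∀ p q r : A × T, p.2 ≤ q.2 → q.2 ≤ r.2 →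
      segOp (segOp p q) r = segOp p (segOp q r)) ∧
    (scan segOp (a.zip t)).map Prod.fst = segscan (a.zip t) :=
  ⟨segOp_assoc_of_le, map_fst_scan_segOp (a.zip t)⟩

/-- Segmented scan is expressible by ordinary scan: `⊛` is associative on pairs with
nondecreasing tags, and the first components of `scan ⊛ (zip a t)` coincide with
`segscan (zip a t)` for a sorted tag list `t`. -/
theorem segscan_by_scan {A T : Type*} [Monoid A] [LinearOrder T]
    (a : List A) (t : List T) (hlen : a.length = t.length)
    (hsorted : t.Pairwise (· ≤ ·)) :
    (∀ p q r : A × T, p.2 ≤ q.2 → q.2 ≤ r.2 →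
      segOp (segOp p q) r = segOp p (segOp q r)) ∧
    (scan segOp (a.zip t)).map Prod.fst = segscan (a.zip t) :=
  segscan_by_scan_general a t
end
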